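/- arXiv:1506.07249 — 2 statements merged into one kernel-verified Lean document; each statement's English description precedes it below -/
import Mathlib

section
/- If a p-minimal k-partition D of Ω is a spectral equipartition (all λ₁(D_i) are equal), then D is q-minimal for every q ∈ [p, +∞]. -/
open scoped ENNReal
open Filter MeasureTheory Metric Real Set

noncomputable section

/-- The Laplacian of a function on Euclidean space (sum of second partials). -/
def lap {d : ℕ} (u : EuclideanSpace ℝ (Fin d) → ℝ) (x : EuclideanSpace ℝ (Fin d)) : ℝ :=
  ∑ i : Fin d, fderiv ℝ (fun y => fderiv ℝ u y (EuclideanSpace.single i 1)) x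
    (EuclideanSpace.single i 1)

/-- `u` is a (classical) Dirichlet eigenfunction on `Ω` with eigenvalue `μ`:
it is `C²` in `Ω`, continuous up to the closure, vanishes on the boundary,
satisfies `-Δu = μ u` in `Ω`, and is not identically zero on `Ω`. -/
def IsDirichletEigenfun {d : ℕ} (Ω : Set (EuclideanSpace ℝ (Fin d))) (μ : ℝ)
    (u : EuclideanSpace ℝ (Fin d) → ℝ) : Prop :=
  ContDiffOn ℝ 2 u Ω ∧ ContinuousOn u (closure Ω) ∧
    (∀ x ∈ frontier Ω, u x = 0) ∧ (∀ x ∈ Ω, lap u x + μ * u x = 0) ∧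
    ¬ (∀ x ∈ Ω, u x = 0)

/-- `μ` is a Dirichlet eigenvalue of (the Laplacian on) `Ω`. -/
def IsDirichletEigenvalue {d : ℕ} (Ω : Set (EuclideanSpace ℝ (Fin d))) (μ : ℝ) : Prop :=
  ∃ u, IsDirichletEigenfun Ω μ u

/-- The eigenspace (including `0`) attached to `μ`. -/
def eigSpace {d : ℕ} (Ω : Set (EuclideanSpace ℝ (Fin d))) (μ : ℝ) :
    Set (EuclideanSpace ℝ (Fin d) → ℝ) :=
  {u | ContDiffOn ℝ 2 u Ω ∧ ContinuousOn u (closure Ω) ∧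
    (∀ x ∈ frontier Ω, u x = 0) ∧ (∀ x ∈ Ω, lap u x + μ * u x = 0)}

/-- The multiplicity of `μ` as Dirichlet eigenvalue of `Ω`. -/
def mult {d : ℕ} (Ω : Set (EuclideanSpace ℝ (Fin d))) (μ : ℝ) : ℕ :=
  Module.finrank ℝ (Submodule.span ℝ (eigSpace Ω μ))

/-- The eigenvalue counting function `N(t, Ω)`: number of Dirichlet eigenvalues
of `Ω` strictly below `t`, counted with multiplicity. -/
def countBelow {d : ℕ} (Ω : Set (EuclideanSpace ℝ (Fin d))) (t : ℝ) : ℝ≥0∞ :=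
  ∑' μ : {μ : ℝ // IsDirichletEigenvalue Ω μ ∧ μ < t}, (mult Ω μ.1 : ℝ≥0∞)

/-- The `k`-th Dirichlet eigenvalue of `Ω` (`1`-indexed, counted with multiplicity),
as an extended nonnegative real; it is `∞` when there are fewer than `k` eigenvalues
(in particular `λ₁(∅) = ∞`). -/
def dirichletEigenvalueE {d : ℕ} (Ω : Set (EuclideanSpace ℝ (Fin d))) (k : ℕ) : ℝ≥0∞ :=
  ⨅ (t : ℝ) (_ : (k : ℝ≥0∞) ≤ countBelow Ω t), ENNReal.ofReal t

/-- The first Dirichlet eigenvalue `λ₁(Ω)`. -/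
def lam1 {d : ℕ} (Ω : Set (EuclideanSpace ℝ (Fin d))) : ℝ≥0∞ :=
  dirichletEigenvalueE Ω 1

/-- The nodal set `N(u)`: the closure in `Ω` of the zero set of `u`. -/
def nodalSet {d : ℕ} (Ω : Set (EuclideanSpace ℝ (Fin d)))
    (u : EuclideanSpace ℝ (Fin d) → ℝ) : Set (EuclideanSpace ℝ (Fin d)) :=
  closure {x ∈ Ω | u x = 0} ∩ Ω

/-- The set of nodal domains of `u`: connected components of `Ω \ N(u)`. -/
def nodalDomains {d : ℕ} (Ω : Set (EuclideanSpace ℝ (Fin d)))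
    (u : EuclideanSpace ℝ (Fin d) → ℝ) : Set (Set (EuclideanSpace ℝ (Fin d))) :=
  {D | ∃ x ∈ Ω \ nodalSet Ω u, D = connectedComponentIn (Ω \ nodalSet Ω u) x}

/-- `ev` enumerates the Dirichlet eigenvalues of `Ω` in nondecreasing order,
counted with multiplicity. -/
def IsSpectralEnum {d : ℕ} (Ω : Set (EuclideanSpace ℝ (Fin d))) (ev : ℕ → ℝ) : Prop :=
  Monotone ev ∧ (∀ n, IsDirichletEigenvalue Ω (ev n)) ∧
  (∀ μ, IsDirichletEigenvalue Ω μ →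
    {n | ev n = μ}.Finite ∧ {n | ev n = μ}.ncard = mult Ω μ)

/-- A `k`-partition of `Ω`: `k` pairwise disjoint nonempty open connected subsets. -/
def IsKPartition {d : ℕ} (Ω : Set (EuclideanSpace ℝ (Fin d))) {k : ℕ}
    (D : Fin k → Set (EuclideanSpace ℝ (Fin d))) : Prop :=
  (∀ i, IsOpen (D i)) ∧ (∀ i, IsConnected (D i)) ∧ (∀ i, D i ⊆ Ω) ∧
    Pairwise (Function.onFun Disjoint D)

/-- The minimal `k`-partition energy `𝔏_k(Ω)`. -/
def LLk {d : ℕ} (Ω : Set (EuclideanSpace ℝ (Fin d))) (k : ℕ) : ℝ≥0∞ :=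
  ⨅ (D : Fin k → Set (EuclideanSpace ℝ (Fin d))) (_ : IsKPartition Ω D), ⨆ i, lam1 (D i)

/-- The rectangle `R(a,b) = (0, aπ) × (0, bπ)` as a subset of `ℝ²`. -/
def rect (a b : ℝ) : Set (EuclideanSpace ℝ (Fin 2)) :=
  {x | x 0 ∈ Set.Ioo 0 (a * Real.pi) ∧ x 1 ∈ Set.Ioo 0 (b * Real.pi)}

/-- The Bessel function of the first kind of integer order `ℓ`. -/
def besselJ (ℓ : ℕ) (x : ℝ) : ℝ :=
  (1 / Real.pi) * ∫ τ in (0:ℝ)..Real.pi, Real.cos (ℓ * τ - x * Real.sin τ)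

/-- The first Dirichlet eigenvalue, as a real number. -/
noncomputable def lam1r {d : ℕ} (Ω : Set (EuclideanSpace ℝ (Fin d))) : ℝ :=
  sInf {μ | IsDirichletEigenvalue Ω μ}

/-- The `p`-energy `Λ_p(D) = ((1/k) Σ_i λ₁(D_i)^p)^{1/p}` of a `k`-partition. -/
noncomputable def energyP {d k : ℕ} (D : Fin k → Set (EuclideanSpace ℝ (Fin d)))
    (p : ℝ) : ℝ :=
  ((1 / (k : ℝ)) * ∑ i, lam1r (D i) ^ p) ^ (1 / p)

/-- The `∞`-energy `Λ(D) = max_i λ₁(D_i)` of a `k`-partition. -/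
noncomputable def energyInf {d k : ℕ}
    (D : Fin k → Set (EuclideanSpace ℝ (Fin d))) : ℝ :=
  ⨆ i, lam1r (D i)

/-- The minimal `p`-energy `𝔏_{k,p}(Ω)`. -/
noncomputable def LLkpR {d : ℕ} (Ω : Set (EuclideanSpace ℝ (Fin d))) (k : ℕ)
    (p : ℝ) : ℝ :=
  sInf {e | ∃ D : Fin k → Set (EuclideanSpace ℝ (Fin d)),
    IsKPartition Ω D ∧ e = energyP D p}

/-- The minimal energy `𝔏_k(Ω)` (real-valued version). -/
noncomputable def LLkR {d : ℕ} (Ω : Set (EuclideanSpace ℝ (Fin d))) (k : ℕ) : ℝ :=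
  sInf {e | ∃ D : Fin k → Set (EuclideanSpace ℝ (Fin d)),
    IsKPartition Ω D ∧ e = energyInf D}

/-!
Let `c` be the common value of the `λ₁(D i)`. By the maximum principle, Dirichlet eigenvalues
of bounded open sets are nonnegative, so the energies `Λ_q(E)` are power means of nonnegative
numbers: nondecreasing in `q` and bounded by the maximum `Λ_∞(E)`. For every partition `E` and
`q ≥ p`, `p`-minimality gives `c = Λ_p(D) ≤ Λ_p(E) ≤ Λ_q(E) ≤ Λ_∞(E)`, while
`Λ_q(D) = Λ_∞(D) = c` because `D` is an equipartition.
-/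

open scoped Topology

/-- If `f'' x₀ > 0`, the second derivative test makes `x₀` a local minimum as well, so `f` is
locally constant and `f'' x₀ = 0`. -/
theorem IsLocalMax.deriv_deriv_nonpos {f : ℝ → ℝ} {x₀ : ℝ} (h : IsLocalMax f x₀)
    (hc : ContinuousAt f x₀) : deriv (deriv f) x₀ ≤ 0 := by
  by_contra! hpos
  have hmin : IsLocalMin f x₀ := isLocalMin_of_deriv_deriv_pos hpos h.deriv_eq_zero hc
  have hconst : f =ᶠ[𝓝 x₀] fun _ => f x₀ := by
    filter_upwards [h, hmin] with x hmax hmin using le_antisymm hmax hmin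
  have : deriv f =ᶠ[𝓝 x₀] fun _ => 0 := by simpa using hconst.deriv
  simp [this.deriv_eq] at hpos

theorem IsLocalMax.fderiv_fderiv_apply_nonpos {E : Type*} [NormedAddCommGroup E]
    [NormedSpace ℝ E] {u : E → ℝ} {x : E} (h : IsLocalMax u x) (hu : ContDiffAt ℝ 2 u x)
    (v : E) : fderiv ℝ (fun y => fderiv ℝ u y v) x v ≤ 0 := by
  have hline : ∀ t : ℝ, HasDerivAt (fun s : ℝ => x + s • v) v t := fun t => by
    simpa using ((hasDerivAt_id t).smul_const v).const_add x
  have hline0 : Tendsto (fun s : ℝ => x + s • v) (𝓝 0) (𝓝 x) := by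
    simpa using (hline 0).continuousAt.tendsto
  have hderiv :
      deriv (fun s : ℝ => u (x + s • v)) =ᶠ[𝓝 0] fun t : ℝ => fderiv ℝ u (x + t • v) v := by
    have hdiff : ∀ᶠ y in 𝓝 x, DifferentiableAt ℝ u y :=
      (hu.eventually (by simp)).mono fun y hy => hy.differentiableAt (by norm_num)
    filter_upwards [hline0.eventually hdiff] with t ht
    exact (ht.hasFDerivAt.comp_hasDerivAt t (hline t)).deriv
  have hsecond : HasDerivAt (fun t : ℝ => fderiv ℝ u (x + t • v) v)
      (fderiv ℝ (fun y => fderiv ℝ u y v) x v) 0 := by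
    have hg : DifferentiableAt ℝ (fun y => fderiv ℝ u y v) x :=
      ((hu.fderiv_right (m := 1) (by norm_num)).clm_apply contDiffAt_const).differentiableAt
        (by norm_num)
    exact hg.hasFDerivAt.comp_hasDerivAt_of_eq 0 (hline 0) (by simp)
  have hmax : IsLocalMax (fun s : ℝ => u (x + s • v)) 0 := by
    filter_upwards [hline0.eventually h] with t ht
    simpa using ht
  rw [← hsecond.deriv, ← hderiv.deriv_eq]
  exact hmax.deriv_deriv_nonpos (hu.continuousAt.comp_of_eq (hline 0).continuousAt (by simp))

theorem IsLocalMax.lap_nonpos {d : ℕ} {u : EuclideanSpace ℝ (Fin d) → ℝ}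
    {x : EuclideanSpace ℝ (Fin d)} (h : IsLocalMax u x) (hu : ContDiffAt ℝ 2 u x) :
    lap u x ≤ 0 :=
  Finset.sum_nonpos fun _ _ => h.fderiv_fderiv_apply_nonpos hu _

theorem lap_neg {d : ℕ} (u : EuclideanSpace ℝ (Fin d) → ℝ) (x : EuclideanSpace ℝ (Fin d)) :
    lap (-u) x = -lap u x := by
  simp [lap, Pi.neg_def]

section Dirichlet

variable {d : ℕ} {A : Set (EuclideanSpace ℝ (Fin d))} {μ : ℝ}
  {u : EuclideanSpace ℝ (Fin d) → ℝ}

theorem IsDirichletEigenfun.neg (hu : IsDirichletEigenfun A μ u) :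
    IsDirichletEigenfun A μ (-u) := by
  obtain ⟨hC2, hcont, hbdry, heq, hne⟩ := hu
  refine ⟨hC2.neg, hcont.neg, fun x hx => by simp [hbdry x hx], fun x hx => ?_,
    fun h => hne fun x hx => by simpa using h x hx⟩
  rw [lap_neg, Pi.neg_apply]
  linarith [heq x hx]

/-- Maximum principle: `|u|` attains its maximum inside `A`, since `u` vanishes on the boundary. -/
theorem IsDirichletEigenfun.exists_pos_isLocalMax (hAo : IsOpen A)
    (hAb : Bornology.IsBounded A) (hu : IsDirichletEigenfun A μ u) :
    ∃ w, IsDirichletEigenfun A μ w ∧ ∃ z ∈ A, 0 < w z ∧ IsLocalMax w z := by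
  obtain ⟨x, hxA, hux⟩ : ∃ x ∈ A, u x ≠ 0 := by simpa using hu.2.2.2.2
  obtain ⟨z, hzc, hzmax⟩ :=
    (isCompact_of_isClosed_isBounded isClosed_closure hAb.closure).exists_isMaxOn
      ⟨x, subset_closure hxA⟩ (continuous_abs.comp_continuousOn hu.2.1)
  have hmax : ∀ y ∈ A, |u y| ≤ |u z| := fun y hy => hzmax (subset_closure hy)
  have huz : u z ≠ 0 := fun h0 => hux (by simpa [h0] using hmax x hxA)
  have hzA : z ∈ A := by
    by_contra hzA
    exact huz (hu.2.2.1 z ⟨hzc, by rwa [hAo.interior_eq]⟩)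
  rcases huz.lt_or_gt with hneg | hpos
  · refine ⟨-u, hu.neg, z, hzA, by simpa using hneg, ?_⟩
    filter_upwards [hAo.mem_nhds hzA] with y hy
    have := hmax y hy
    simp only [Pi.neg_apply]
    rw [abs_of_neg hneg] at this
    linarith [neg_le_abs (u y)]
  · refine ⟨u, hu, z, hzA, hpos, ?_⟩
    filter_upwards [hAo.mem_nhds hzA] with y hy
    have := hmax y hy
    rw [abs_of_pos hpos] at this
    linarith [le_abs_self (u y)]

theorem IsDirichletEigenvalue.nonneg (hAo : IsOpen A) (hAb : Bornology.IsBounded A)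
    (h : IsDirichletEigenvalue A μ) : 0 ≤ μ := by
  obtain ⟨u, hu⟩ := h
  obtain ⟨w, hw, z, hzA, hwz, hmax⟩ := hu.exists_pos_isLocalMax hAo hAb
  have hlap : lap w z ≤ 0 := hmax.lap_nonpos (hw.1.contDiffAt (hAo.mem_nhds hzA))
  have heq := hw.2.2.2.1 z hzA
  nlinarith

theorem lam1r_nonneg (hAo : IsOpen A) (hAb : Bornology.IsBounded A) : 0 ≤ lam1r A :=
  Real.sInf_nonneg fun _ hμ => IsDirichletEigenvalue.nonneg hAo hAb hμ

end Dirichlet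

section PowerMean

variable {ι : Type*} [Fintype ι]

def powerMean (a : ι → ℝ) (p : ℝ) : ℝ :=
  ((1 / (Fintype.card ι : ℝ)) * ∑ i, a i ^ p) ^ (1 / p)

variable {a : ι → ℝ} {p q : ℝ}

theorem one_div_card_mul_sum_rpow_nonneg (ha : ∀ i, 0 ≤ a i) (p : ℝ) :
    0 ≤ (1 / (Fintype.card ι : ℝ)) * ∑ i, a i ^ p :=
  mul_nonneg (by positivity) (Finset.sum_nonneg fun i _ => Real.rpow_nonneg (ha i) p)

theorem powerMean_nonneg (ha : ∀ i, 0 ≤ a i) : 0 ≤ powerMean a p :=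
  Real.rpow_nonneg (one_div_card_mul_sum_rpow_nonneg ha p) _

theorem powerMean_const [Nonempty ι] {c : ℝ} (hc : 0 ≤ c) (hp : p ≠ 0) :
    powerMean (fun _ : ι => c) p = c := by
  have hcard : (Fintype.card ι : ℝ) ≠ 0 := by exact_mod_cast Fintype.card_ne_zero
  rw [powerMean, Finset.sum_const, Finset.card_univ, nsmul_eq_mul, one_div,
    inv_mul_cancel_left₀ hcard, ← Real.rpow_mul hc, mul_one_div_cancel hp, Real.rpow_one]

/-- Jensen's inequality for `t ↦ t ^ (q / p)`, applied to the `a i ^ p`. -/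
theorem powerMean_le_powerMean [Nonempty ι] (ha : ∀ i, 0 ≤ a i) (hp : 0 < p) (hpq : p ≤ q) :
    powerMean a p ≤ powerMean a q := by
  have hw : ∑ _i : ι, 1 / (Fintype.card ι : ℝ) = 1 := by
    simp [Finset.card_univ]
  have hjensen := Real.arith_mean_le_rpow_mean Finset.univ (fun _ => 1 / (Fintype.card ι : ℝ))
    (fun i => a i ^ p) (fun _ _ => by positivity) hw (fun i _ => Real.rpow_nonneg (ha i) p)
    ((one_le_div hp).mpr hpq)
  simp only [← Finset.mul_sum, ← Real.rpow_mul (ha _), mul_div_cancel₀ _ hp.ne'] at hjensen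
  calc powerMean a p
      ≤ (((1 / (Fintype.card ι : ℝ)) * ∑ i, a i ^ q) ^ (1 / (q / p))) ^ (1 / p) :=
        Real.rpow_le_rpow (one_div_card_mul_sum_rpow_nonneg ha p) hjensen (by positivity)
    _ = powerMean a q := by
        rw [powerMean, ← Real.rpow_mul (one_div_card_mul_sum_rpow_nonneg ha q)]
        congr 1
        field_simp

theorem powerMean_le_iSup [Nonempty ι] (ha : ∀ i, 0 ≤ a i) (hp : 0 < p) :
    powerMean a p ≤ ⨆ i, a i := by
  have hle : ∀ i, a i ≤ ⨆ i, a i := le_ciSup (Set.finite_range a).bddAbove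
  calc powerMean a p ≤ powerMean (fun _ => ⨆ i, a i) p := by
        refine Real.rpow_le_rpow (one_div_card_mul_sum_rpow_nonneg ha p) ?_ (by positivity)
        gcongr with i
        · exact ha i
        · exact hle i
    _ = ⨆ i, a i :=
        powerMean_const ((ha (Classical.arbitrary ι)).trans (hle _)) hp.ne'

end PowerMean

section Partition

variable {d k : ℕ} {Ω : Set (EuclideanSpace ℝ (Fin d))}
  {D E : Fin k → Set (EuclideanSpace ℝ (Fin d))}

theorem energyP_eq_powerMean (p : ℝ) : energyP D p = powerMean (fun i => lam1r (D i)) p := by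
  simp [energyP, powerMean]

theorem IsKPartition.lam1r_nonneg (hΩb : Bornology.IsBounded Ω) (hE : IsKPartition Ω E)
    (i : Fin k) : 0 ≤ lam1r (E i) :=
  _root_.lam1r_nonneg (hE.1 i) (hΩb.subset (hE.2.2.1 i))

theorem sInf_setOf_exists_eq_of_forall_le {α : Type*} {P : α → Prop} {f : α → ℝ} {x : α}
    (hx : P x) (h : ∀ y, P y → f x ≤ f y) : sInf {e | ∃ y, P y ∧ e = f y} = f x :=
  IsLeast.csInf_eq ⟨⟨x, hx, rfl⟩, by rintro _ ⟨y, hy, rfl⟩; exact h y hy⟩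

theorem LLkpR_le_energyP (hΩb : Bornology.IsBounded Ω) (hE : IsKPartition Ω E) (p : ℝ) :
    LLkpR Ω k p ≤ energyP E p := by
  refine csInf_le ⟨0, ?_⟩ ⟨E, hE, rfl⟩
  rintro _ ⟨F, hF, rfl⟩
  rw [energyP_eq_powerMean]
  exact powerMean_nonneg (hF.lam1r_nonneg hΩb)

theorem LLkpR_eq_of_forall_le (hD : IsKPartition Ω D) {p : ℝ}
    (h : ∀ F : Fin k → Set (EuclideanSpace ℝ (Fin d)), IsKPartition Ω F →
      energyP D p ≤ energyP F p) : LLkpR Ω k p = energyP D p :=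
  sInf_setOf_exists_eq_of_forall_le hD h

theorem LLkR_eq_of_forall_le (hD : IsKPartition Ω D)
    (h : ∀ F : Fin k → Set (EuclideanSpace ℝ (Fin d)), IsKPartition Ω F →
      energyInf D ≤ energyInf F) : LLkR Ω k = energyInf D :=
  sInf_setOf_exists_eq_of_forall_le hD h

end Partition

theorem stmt15_general (Ω : Set (EuclideanSpace ℝ (Fin 2)))
    (hΩb : Bornology.IsBounded Ω) (k : ℕ) (hk : 1 ≤ k) (p : ℝ) (hp : 1 ≤ p)
    (D : Fin k → Set (EuclideanSpace ℝ (Fin 2))) (hD : IsKPartition Ω D)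
    (hmin : energyP D p = LLkpR Ω k p)
    (hequi : ∀ i j, lam1r (D i) = lam1r (D j)) :
    (∀ q : ℝ, p ≤ q → energyP D q = LLkpR Ω k q) ∧ energyInf D = LLkR Ω k := by
  have : Nonempty (Fin k) := ⟨⟨0, hk⟩⟩
  set c := lam1r (D ⟨0, hk⟩)
  have hconst : (fun i => lam1r (D i)) = fun _ => c := funext fun i => hequi i _
  have hc : 0 ≤ c := hD.lam1r_nonneg hΩb _
  have hDq : ∀ q, p ≤ q → energyP D q = c := fun q hpq => by
    rw [energyP_eq_powerMean, hconst, powerMean_const hc (by linarith)]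
  have hDinf : energyInf D = c := by rw [energyInf, hconst, ciSup_const]
  have hlower : ∀ E, IsKPartition Ω E → c ≤ powerMean (fun i => lam1r (E i)) p :=
    fun E hE => by
      rw [← energyP_eq_powerMean, ← hDq p le_rfl, hmin]
      exact LLkpR_le_energyP hΩb hE p
  refine ⟨fun q hpq => (LLkpR_eq_of_forall_le hD fun E hE => ?_).symm,
    (LLkR_eq_of_forall_le hD fun E hE => ?_).symm⟩
  · rw [hDq q hpq, energyP_eq_powerMean]
    exact (hlower E hE).trans (powerMean_le_powerMean (hE.lam1r_nonneg hΩb) (by linarith) hpq)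
  · rw [hDinf, energyInf]
    exact (hlower E hE).trans (powerMean_le_iSup (hE.lam1r_nonneg hΩb) (by linarith))

/-- If a `p`-minimal `k`-partition `D` of `Ω` is a spectral
equipartition (all `λ₁(D_i)` are equal), then `D` is `q`-minimal for every
`q ∈ [p, ∞]`. -/
theorem stmt15 (Ω : Set (EuclideanSpace ℝ (Fin 2))) (hΩo : IsOpen Ω)
    (hΩb : Bornology.IsBounded Ω) (k : ℕ) (hk : 1 ≤ k) (p : ℝ) (hp : 1 ≤ p)
    (D : Fin k → Set (EuclideanSpace ℝ (Fin 2))) (hD : IsKPartition Ω D)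
    (hmin : energyP D p = LLkpR Ω k p)
    (hequi : ∀ i j, lam1r (D i) = lam1r (D j)) :
    (∀ q : ℝ, p ≤ q → energyP D q = LLkpR Ω k q) ∧ energyInf D = LLkR Ω k :=
  stmt15_general Ω hΩb k hk p hp D hD hmin hequi

end
end

section
/- Lower bound for the counting function of the rectangle: for R = (0,aπ)×(0,bπ) and λ ≥ 1/a² + 1/b², the number N(λ) of pairs (m,n) of positive integers with m²/a² + n²/b² < λ satisfies N(λ) > (ab π²/(4π))λ − ((a+b)π/π)·√λ + 1, i.e. N(λ) > (|R|/(4π))λ − (|∂R|/(2π))√λ + 1. -/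
/-!
Count column by column. Over the abscissa `m ≥ 1` the admissible `n ≥ 1` are those with
`n < h m`, where `h x = b √(λ - x²/a²)` is the height of the ellipse, so there are at least
`h m - 1` of them. As `h` is decreasing, summing over `m` dominates an integral:
`N(λ) ≥ ∫₁^{a√λ} (h - 1) = abπλ/4 - ∫₀¹ h - (a√λ - 1)`, and `∫₀¹ h < h 0 = b√λ`.
-/

open scoped ENNReal
open Filter MeasureTheory Metric Real Set

noncomputable section

theorem integral_sqrt_one_sub_sq_zero_one : ∫ x in (0 : ℝ)..1, √(1 - x ^ 2) = π / 4 := by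
  have hcont : Continuous fun x : ℝ => √(1 - x ^ 2) := by fun_prop
  have hsymm : ∫ x in (-1 : ℝ)..0, √(1 - x ^ 2) = ∫ x in (0 : ℝ)..1, √(1 - x ^ 2) := by
    have h := intervalIntegral.integral_comp_neg (a := (0 : ℝ)) (b := 1) fun x => √(1 - x ^ 2)
    simp only [neg_sq, neg_zero] at h
    exact h.symm
  have := intervalIntegral.integral_add_adjacent_intervals
    (hcont.intervalIntegrable (μ := volume) (-1) 0) (hcont.intervalIntegrable 0 1)
  rw [hsymm, integral_sqrt_one_sub_sq] at this
  linarith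

theorem integral_sqrt_sq_sub_sq {r : ℝ} (hr : 0 ≤ r) :
    ∫ x in (0 : ℝ)..r, √(r ^ 2 - x ^ 2) = π / 4 * r ^ 2 := by
  rcases hr.eq_or_lt with rfl | hr
  · simp
  have hscale (x : ℝ) : √(r ^ 2 - (r * x) ^ 2) = r * √(1 - x ^ 2) := by
    rw [show r ^ 2 - (r * x) ^ 2 = r ^ 2 * (1 - x ^ 2) by ring, sqrt_mul (sq_nonneg r),
      sqrt_sq hr.le]
  calc ∫ x in (0 : ℝ)..r, √(r ^ 2 - x ^ 2)
      = r * ∫ x in (0 : ℝ)..1, √(r ^ 2 - (r * x) ^ 2) := by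
        rw [intervalIntegral.integral_comp_mul_left (fun x => √(r ^ 2 - x ^ 2)) hr.ne', mul_zero,
          mul_one, smul_eq_mul, mul_inv_cancel_left₀ hr.ne']
    _ = r * (r * ∫ x in (0 : ℝ)..1, √(1 - x ^ 2)) := by
        simp only [hscale, intervalIntegral.integral_const_mul]
    _ = π / 4 * r ^ 2 := by
        rw [integral_sqrt_one_sub_sq_zero_one]
        ring

theorem max_sub_one_zero_le_card_Ico_one_ceil (h : ℝ) :
    max (h - 1) 0 ≤ ((Finset.Ico 1 ⌈h⌉₊).card : ℝ) := by
  rw [Nat.card_Ico]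
  rcases Nat.eq_zero_or_pos ⌈h⌉₊ with h0 | hpos
  · simpa [h0] using (Nat.ceil_eq_zero.mp h0).trans zero_le_one
  · rw [Nat.cast_sub hpos, Nat.cast_one]
    have h1 : (1 : ℝ) ≤ ⌈h⌉₊ := by exact_mod_cast hpos
    exact max_le (by linarith [Nat.le_ceil h]) (by linarith)

def latticeBelow (g : ℝ → ℝ) : Set (ℕ × ℕ) :=
  {p | 1 ≤ p.1 ∧ 1 ≤ p.2 ∧ (p.2 : ℝ) < g p.1}

section LatticeBelow

variable {g : ℝ → ℝ} {c : ℝ}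

theorem sum_max_sub_one_zero_le_ncard_latticeBelow (M : ℕ) (hfin : (latticeBelow g).Finite) :
    ∑ m ∈ Finset.Ico 1 M, max (g m - 1) 0 ≤ ((latticeBelow g).ncard : ℝ) := by
  set T := (Finset.Ico 1 M).sigma fun m => Finset.Ico 1 ⌈g m⌉₊
  have hT : (T : Set (Σ _ : ℕ, ℕ)).ncard ≤ (latticeBelow g).ncard := by
    refine Set.ncard_le_ncard_of_injOn (fun q => (q.1, q.2)) ?_ ?_ hfin
    · rintro ⟨m, n⟩ hq
      simp only [T, Finset.coe_sigma, Set.mem_sigma_iff, Finset.coe_Ico, Set.mem_Ico] at hq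
      exact ⟨hq.1.1, hq.2.1, Nat.lt_ceil.mp hq.2.2⟩
    · rintro ⟨m, n⟩ - ⟨m', n'⟩ - h
      obtain ⟨rfl, rfl⟩ := Prod.mk.inj h
      rfl
  calc ∑ m ∈ Finset.Ico 1 M, max (g m - 1) 0
      ≤ ∑ m ∈ Finset.Ico 1 M, ((Finset.Ico 1 ⌈g m⌉₊).card : ℝ) :=
        Finset.sum_le_sum fun m _ => max_sub_one_zero_le_card_Ico_one_ceil (g m)
    _ = (T.card : ℝ) := by rw [Finset.card_sigma]; push_cast; rfl
    _ ≤ _ := by rw [← Set.ncard_coe_finset]; exact_mod_cast hT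

theorem latticeBelow_finite (hg : AntitoneOn g (Ici 1)) (hgc : ∀ x, c ≤ x → g x ≤ 1) :
    (latticeBelow g).Finite := by
  refine (Finset.Icc 1 ⌈c⌉₊ ×ˢ Finset.Icc 1 ⌈g 1⌉₊).finite_toSet.subset ?_
  rintro ⟨m, n⟩ ⟨hm, hn, hlt⟩
  have hm' : (1 : ℝ) ≤ m := by exact_mod_cast hm
  have hn' : (1 : ℝ) ≤ n := by exact_mod_cast hn
  have hmc : (m : ℝ) < c := by
    by_contra! h
    linarith [hgc m h]
  have hng : (n : ℝ) < g 1 := hlt.trans_le (hg self_mem_Ici hm' hm')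
  simp only [Finset.coe_product, Finset.coe_Icc, Set.mem_prod, Set.mem_Icc]
  refine ⟨⟨hm, ?_⟩, hn, ?_⟩
  · exact_mod_cast hmc.le.trans (Nat.le_ceil c)
  · exact_mod_cast hng.le.trans (Nat.le_ceil (g 1))

theorem integral_sub_one_le_ncard_latticeBelow (hc : 1 ≤ c) (hg : AntitoneOn g (Ici 1))
    (hgc : ∀ x, c ≤ x → g x ≤ 1) :
    ∫ x in (1 : ℝ)..c, (g x - 1) ≤ ((latticeBelow g).ncard : ℝ) := by
  set F : ℝ → ℝ := fun x => max (g x - 1) 0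
  have hF : AntitoneOn F (Ici 1) := fun x hx y hy hxy =>
    max_le_max (sub_le_sub_right (hg hx hy hxy) 1) le_rfl
  have hcM : c ≤ ⌈c⌉₊ := Nat.le_ceil c
  have hM : 1 ≤ ⌈c⌉₊ := Nat.one_le_iff_ne_zero.mpr (by positivity)
  have hIcc {d : ℝ} (hd : 1 ≤ d) : uIcc 1 d ⊆ Ici 1 := by
    rw [uIcc_of_le hd]
    exact Icc_subset_Ici_self
  calc ∫ x in (1 : ℝ)..c, (g x - 1)
      ≤ ∫ x in (1 : ℝ)..c, F x :=
        intervalIntegral.integral_mono_on hc ((hg.mono (hIcc hc)).intervalIntegrable.sub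
          intervalIntegrable_const) (hF.mono (hIcc hc)).intervalIntegrable
          fun x _ => le_max_left _ _
    _ ≤ ∫ x in (1 : ℝ)..⌈c⌉₊, F x :=
        intervalIntegral.integral_mono_interval le_rfl hc hcM
          (Eventually.of_forall fun x => le_max_right _ _)
          (hF.mono (hIcc (hc.trans hcM))).intervalIntegrable
    _ ≤ ∑ m ∈ Finset.Ico 1 ⌈c⌉₊, F m := by
        simpa using AntitoneOn.integral_le_sum_Ico hM (hF.mono fun x hx => by simpa using hx.1)
    _ ≤ _ := sum_max_sub_one_zero_le_ncard_latticeBelow _ (latticeBelow_finite hg hgc)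

end LatticeBelow

def ellipseHeight (a b lam x : ℝ) : ℝ := b * √(lam - x ^ 2 / a ^ 2)

section EllipseHeight

variable {a b lam : ℝ}

theorem lt_ellipseHeight_iff (hb : 0 < b) {x y : ℝ} (hy : 0 ≤ y) :
    y < ellipseHeight a b lam x ↔ x ^ 2 / a ^ 2 + y ^ 2 / b ^ 2 < lam := by
  rw [ellipseHeight, ← div_lt_iff₀' hb, lt_sqrt (div_nonneg hy hb.le), div_pow,
    lt_sub_iff_add_lt']

theorem continuous_ellipseHeight : Continuous (ellipseHeight a b lam) := by
  unfold ellipseHeight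
  fun_prop

theorem antitoneOn_ellipseHeight (hb : 0 ≤ b) : AntitoneOn (ellipseHeight a b lam) (Ici 0) :=
  fun _ hx _ _ hxy => mul_le_mul_of_nonneg_left (sqrt_le_sqrt (sub_le_sub_left
    (div_le_div_of_nonneg_right (pow_le_pow_left₀ hx hxy 2) (sq_nonneg a)) lam)) hb

theorem ellipseHeight_eq_zero (ha : 0 < a) {x : ℝ} (hx : a * √lam ≤ x) :
    ellipseHeight a b lam x = 0 := by
  suffices lam ≤ x ^ 2 / a ^ 2 by simp [ellipseHeight, sqrt_eq_zero'.mpr (sub_nonpos.mpr this)]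
  rcases lt_or_ge lam 0 with hlam | hlam
  · exact hlam.le.trans (by positivity)
  · rw [le_div_iff₀ (by positivity)]
    calc lam * a ^ 2 = (a * √lam) ^ 2 := by rw [mul_pow, sq_sqrt hlam]; ring
      _ ≤ x ^ 2 := pow_le_pow_left₀ (by positivity) hx 2

theorem integral_ellipseHeight (ha : 0 < a) (hlam : 0 ≤ lam) :
    ∫ x in (0 : ℝ)..a * √lam, ellipseHeight a b lam x = π / 4 * a * b * lam := by
  have hscale (t : ℝ) : ellipseHeight a b lam (a * t) = b * √(√lam ^ 2 - t ^ 2) := by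
    rw [ellipseHeight, sq_sqrt hlam, mul_pow, mul_div_cancel_left₀ _ (by positivity)]
  calc ∫ x in (0 : ℝ)..a * √lam, ellipseHeight a b lam x
      = a * ∫ t in (0 : ℝ)..√lam, ellipseHeight a b lam (a * t) := by
        rw [intervalIntegral.integral_comp_mul_left _ ha.ne', mul_zero, smul_eq_mul,
          mul_inv_cancel_left₀ ha.ne']
    _ = a * (b * ∫ t in (0 : ℝ)..√lam, √(√lam ^ 2 - t ^ 2)) := by
        simp only [hscale, intervalIntegral.integral_const_mul]
    _ = π / 4 * a * b * lam := by
        rw [integral_sqrt_sq_sub_sq (sqrt_nonneg _), sq_sqrt hlam]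
        ring

theorem integral_ellipseHeight_zero_one_lt (ha : a ≠ 0) (hb : 0 < b) (hlam : 0 < lam) :
    ∫ x in (0 : ℝ)..1, ellipseHeight a b lam x < b * √lam := by
  have hle (x : ℝ) : ellipseHeight a b lam x ≤ b * √lam :=
    mul_le_mul_of_nonneg_left (sqrt_le_sqrt (sub_le_self _ (by positivity))) hb.le
  have hlt : ellipseHeight a b lam 1 < b * √lam :=
    mul_lt_mul_of_pos_left
      ((sqrt_lt_sqrt_iff_of_pos hlam).mpr (sub_lt_self _ (by positivity))) hb
  calc ∫ x in (0 : ℝ)..1, ellipseHeight a b lam x < ∫ _ in (0 : ℝ)..1, b * √lam :=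
        intervalIntegral.integral_lt_integral_of_continuousOn_of_le_of_exists_lt zero_lt_one
          continuous_ellipseHeight.continuousOn continuousOn_const (fun x _ => hle x)
          ⟨1, right_mem_Icc.mpr zero_le_one, hlt⟩
    _ = b * √lam := by simp

end EllipseHeight

/-- **counting lower bound for the rectangle.** For
`λ ≥ 1/a² + 1/b²`, the number of pairs `(m,n)` of positive integers with
`m²/a² + n²/b² < λ` satisfies `N(λ) > (|R|/(4π)) λ − (|∂R|/(2π)) √λ + 1`, i.e.
`N(λ) > (abπ/4) λ − (a+b) √λ + 1`. -/
theorem stmt17 (a b : ℝ) (ha : 0 < a) (hb : 0 < b) (lam : ℝ)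
    (hlam : 1 / a ^ 2 + 1 / b ^ 2 ≤ lam) :
    ((({p : ℕ × ℕ | 1 ≤ p.1 ∧ 1 ≤ p.2 ∧
        (p.1 : ℝ) ^ 2 / a ^ 2 + (p.2 : ℝ) ^ 2 / b ^ 2 < lam}).ncard : ℝ)) >
      a * b * Real.pi / 4 * lam - (a + b) * Real.sqrt lam + 1 := by
  have hlam₀ : 0 < lam := lt_of_lt_of_le (by positivity) hlam
  have hc : 1 ≤ a * √lam := by
    rw [← div_le_iff₀' ha, le_sqrt (by positivity) hlam₀.le, div_pow, one_pow]
    linarith [show 0 < 1 / b ^ 2 by positivity]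
  have hset : {p : ℕ × ℕ | 1 ≤ p.1 ∧ 1 ≤ p.2 ∧
      (p.1 : ℝ) ^ 2 / a ^ 2 + (p.2 : ℝ) ^ 2 / b ^ 2 < lam} =
      latticeBelow (ellipseHeight a b lam) := by
    ext ⟨m, n⟩
    simp only [latticeBelow, mem_ofPred_eq, lt_ellipseHeight_iff hb (Nat.cast_nonneg n)]
  have hcount := integral_sub_one_le_ncard_latticeBelow hc
    ((antitoneOn_ellipseHeight hb.le).mono (Ici_subset_Ici.mpr zero_le_one))
    fun x hx => (ellipseHeight_eq_zero ha hx).trans_le zero_le_one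
  have hsplit : ∫ x in (1 : ℝ)..a * √lam, (ellipseHeight a b lam x - 1) =
      (∫ x in (0 : ℝ)..a * √lam, ellipseHeight a b lam x) -
        (∫ x in (0 : ℝ)..1, ellipseHeight a b lam x) - (a * √lam - 1) := by
    have hint (u v : ℝ) : IntervalIntegrable (ellipseHeight a b lam) volume u v :=
      continuous_ellipseHeight.intervalIntegrable u v
    rw [intervalIntegral.integral_sub (hint _ _) intervalIntegrable_const,
      intervalIntegral.integral_const, smul_eq_mul, mul_one,
      intervalIntegral.integral_interval_sub_left (hint _ _) (hint _ _)]
  rw [hset, gt_iff_lt]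
  linarith [integral_ellipseHeight (b := b) ha hlam₀.le,
    integral_ellipseHeight_zero_one_lt ha.ne' hb hlam₀]

end
end
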